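/- Let m ≥ 2 and let b > 1. Let K : ℝ^m \ {0} → (0, ∞) be a function satisfying K(ξ) ≥ b(m−1)/‖ξ‖ for every ξ ≠ 0. Then there exists no C² function u : ℝ^m \ {0} → ℝ, positively homogeneous of degree 0, solving the vertical mean curvature equation for K. -/

import Mathlib

/-!
At a point `ξ` of the unit sphere where `u` is minimal, 0-homogeneity makes `ξ` a local minimum
of `u` on all of `ℝ^m`, so `∇u(ξ) = 0` and the Hessian of `u` at `ξ` is positive semidefinite.
The equation at `ξ` then reads `Δu(ξ) = (m-1) - e^{u(ξ)} K(e^{u(ξ)} ξ) ≤ (m-1)(1-b) < 0`,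
contradicting `Δu(ξ) ≥ 0`.
-/

open Filter Topology

/-- `u` solves the vertical mean curvature equation for `K`: for every unit vector `ξ`,
`(1 + ‖∇u‖²) Δu − D²u(∇u, ∇u) = (m−1)(1 + ‖∇u‖²) − (1 + ‖∇u‖²)^{3/2} e^u K(e^u ξ)`,
where `∇u` is the gradient, `D²u` the Hessian, and `Δu` the Laplacian (trace of the
Hessian over the standard orthonormal basis). -/
def SolvesVerticalMeanCurvatureEq (m : ℕ)
    (u K : EuclideanSpace ℝ (Fin m) → ℝ) : Prop :=
  ∀ ξ : EuclideanSpace ℝ (Fin m), ‖ξ‖ = 1 →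
    (1 + ‖gradient u ξ‖ ^ 2) *
        (∑ i : Fin m, fderiv ℝ (fderiv ℝ u) ξ (EuclideanSpace.single i 1)
          (EuclideanSpace.single i 1))
      - fderiv ℝ (fderiv ℝ u) ξ (gradient u ξ) (gradient u ξ)
    = (m - 1 : ℝ) * (1 + ‖gradient u ξ‖ ^ 2)
      - (1 + ‖gradient u ξ‖ ^ 2) ^ ((3 : ℝ) / 2) * Real.exp (u ξ)
        * K (Real.exp (u ξ) • ξ)

theorem IsLocalMin.deriv_deriv_nonneg {g : ℝ → ℝ} {a : ℝ} (hmin : IsLocalMin g a)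
    (hc : ContinuousAt g a) : 0 ≤ deriv (deriv g) a := by
  by_contra! hneg
  have hmax : IsLocalMax g a := isLocalMax_of_deriv_deriv_neg hneg hmin.deriv_eq_zero hc
  have hconst : g =ᶠ[𝓝 a] fun _ => g a := by
    filter_upwards [hmin, hmax] with x hx₁ hx₂ using le_antisymm hx₂ hx₁
  refine hneg.ne ?_
  rw [hconst.deriv.deriv_eq]
  simp

theorem IsLocalMin.fderiv_fderiv_apply_self_nonneg {E : Type*} [NormedAddCommGroup E]
    [NormedSpace ℝ E] {u : E → ℝ} {ξ : E} (hmin : IsLocalMin u ξ) (hu : ContDiffAt ℝ 2 u ξ)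
    (v : E) : 0 ≤ fderiv ℝ (fderiv ℝ u) ξ v v := by
  set L : ℝ → E := fun t => ξ + t • v
  have hL : ∀ t, HasDerivAt L v t := fun t =>
    (((hasDerivAt_id t).smul_const v).congr_deriv (one_smul ℝ v)).const_add ξ
  have hL0 : L 0 = ξ := by simp [L]
  have hLξ : Tendsto L (𝓝 0) (𝓝 ξ) := hL0 ▸ (hL 0).continuousAt.tendsto
  have hderiv : deriv (u ∘ L) =ᶠ[𝓝 0] fun t => fderiv ℝ u (L t) v := by
    have hdiff : ∀ᶠ x in 𝓝 ξ, DifferentiableAt ℝ u x :=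
      (hu.eventually (by norm_num)).mono fun x hx => hx.differentiableAt (by norm_num)
    filter_upwards [hLξ.eventually hdiff] with t ht
    exact (ht.hasFDerivAt.comp_hasDerivAt t (hL t)).deriv
  have hsecond : HasDerivAt (fun t => fderiv ℝ u (L t) v) (fderiv ℝ (fderiv ℝ u) ξ v v) 0 := by
    have hu' : HasFDerivAt (fderiv ℝ u) (fderiv ℝ (fderiv ℝ u) ξ) (L 0) := hL0 ▸
      ((hu.fderiv_right (m := 1) (by norm_num)).differentiableAt (by norm_num)).hasFDerivAt
    simpa using (hu'.comp_hasDerivAt 0 (hL 0)).clm_apply (hasDerivAt_const 0 v)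
  have hminL : IsLocalMin u (L 0) := by rwa [hL0]
  have hcontL : ContinuousAt u (L 0) := by rw [hL0]; exact hu.continuousAt
  rw [← hsecond.deriv, ← hderiv.deriv_eq]
  exact (hminL.comp_continuous (hL 0).continuousAt).deriv_deriv_nonneg
    (hcontL.comp (hL 0).continuousAt)

theorem exists_norm_eq_one_isLocalMin_of_homogeneous {E : Type*} [NormedAddCommGroup E]
    [NormedSpace ℝ E] [ProperSpace E] [Nontrivial E] {u : E → ℝ}
    (hu : ∀ x ≠ 0, ContinuousAt u x) (hhom : ∀ t : ℝ, 0 < t → ∀ x ≠ 0, u (t • x) = u x) :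
    ∃ ξ : E, ‖ξ‖ = 1 ∧ IsLocalMin u ξ := by
  have hsphere : ∀ x ∈ Metric.sphere (0 : E) 1, x ≠ 0 := fun x hx =>
    ne_zero_of_mem_unit_sphere ⟨x, hx⟩
  obtain ⟨ξ, hξ, hmin⟩ := (isCompact_sphere (0 : E) 1).exists_isMinOn
    (NormedSpace.sphere_nonempty.mpr zero_le_one)
    fun x hx => (hu x (hsphere x hx)).continuousWithinAt
  have hmin' : IsMinOn u {0}ᶜ ξ := fun x (hx : x ≠ 0) => by
    have hxs : ‖x‖⁻¹ • x ∈ Metric.sphere (0 : E) 1 := by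
      simp [norm_smul, norm_ne_zero_iff.mpr hx]
    simpa [hhom _ (inv_pos.mpr (norm_pos_iff.mpr hx)) x hx] using hmin hxs
  exact ⟨ξ, mem_sphere_zero_iff_norm.mp hξ,
    hmin'.isLocalMin (isOpen_compl_singleton.mem_nhds (hsphere ξ hξ))⟩

theorem SolvesVerticalMeanCurvatureEq.laplacian_eq {m : ℕ} {u K : EuclideanSpace ℝ (Fin m) → ℝ}
    (h : SolvesVerticalMeanCurvatureEq m u K) {ξ : EuclideanSpace ℝ (Fin m)} (hξ : ‖ξ‖ = 1)
    (hgrad : gradient u ξ = 0) :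
    ∑ i : Fin m, fderiv ℝ (fderiv ℝ u) ξ (EuclideanSpace.single i 1) (EuclideanSpace.single i 1)
      = (m - 1 : ℝ) - Real.exp (u ξ) * K (Real.exp (u ξ) • ξ) := by
  simpa [hgrad] using h ξ hξ

theorem nonexistence_large_K_general (m : ℕ) (hm : 2 ≤ m) (b : ℝ) (hb : 1 < b)
    (K : EuclideanSpace ℝ (Fin m) → ℝ)
    (hKge : ∀ ξ : EuclideanSpace ℝ (Fin m), ξ ≠ 0 → b * (m - 1 : ℝ) / ‖ξ‖ ≤ K ξ) :
    ¬ ∃ u : EuclideanSpace ℝ (Fin m) → ℝ,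
        (∀ x : EuclideanSpace ℝ (Fin m), x ≠ 0 → ContDiffAt ℝ 2 u x) ∧
        (∀ t : ℝ, 0 < t → ∀ x : EuclideanSpace ℝ (Fin m), x ≠ 0 → u (t • x) = u x) ∧
        SolvesVerticalMeanCurvatureEq m u K := by
  rintro ⟨u, hC2, hhom, heq⟩
  have : Nonempty (Fin m) := ⟨⟨0, by omega⟩⟩
  obtain ⟨ξ, hξ, hmin⟩ := exists_norm_eq_one_isLocalMin_of_homogeneous
    (fun x hx => (hC2 x hx).continuousAt) hhom
  have hξ0 : ξ ≠ 0 := norm_ne_zero_iff.mp (by simp [hξ])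
  have hgrad : gradient u ξ = 0 := by simp [gradient, hmin.fderiv_eq_zero]
  have hlap : 0 ≤ ∑ i : Fin m, fderiv ℝ (fderiv ℝ u) ξ (EuclideanSpace.single i 1)
      (EuclideanSpace.single i 1) := Finset.sum_nonneg fun i _ =>
    hmin.fderiv_fderiv_apply_self_nonneg (hC2 ξ hξ0) _
  rw [heq.laplacian_eq hξ hgrad] at hlap
  have hK : b * (m - 1 : ℝ) ≤ Real.exp (u ξ) * K (Real.exp (u ξ) • ξ) := by
    have := hKge _ (smul_ne_zero (Real.exp_ne_zero (u ξ)) hξ0)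
    rwa [norm_smul, hξ, mul_one, Real.norm_eq_abs, abs_of_pos (Real.exp_pos _),
      div_le_iff₀ (Real.exp_pos _), mul_comm (K _)] at this
  have hm1 : (1 : ℝ) ≤ m - 1 := by
    have : (2 : ℝ) ≤ m := by exact_mod_cast hm
    linarith
  nlinarith

/-- Nonexistence (§5.4, Remark 1, second claim): if `K > 0` satisfies
`K(ξ) ≥ b(m−1)/‖ξ‖` for some `b > 1` and all `ξ ≠ 0`, then there is no C²,
positively 0-homogeneous solution of the vertical mean curvature equation for `K`. -/
theorem nonexistence_large_K (m : ℕ) (hm : 2 ≤ m) (b : ℝ) (hb : 1 < b)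
    (K : EuclideanSpace ℝ (Fin m) → ℝ)
    (hKpos : ∀ ξ : EuclideanSpace ℝ (Fin m), ξ ≠ 0 → 0 < K ξ)
    (hKge : ∀ ξ : EuclideanSpace ℝ (Fin m), ξ ≠ 0 → b * (m - 1 : ℝ) / ‖ξ‖ ≤ K ξ) :
    ¬ ∃ u : EuclideanSpace ℝ (Fin m) → ℝ,
        (∀ x : EuclideanSpace ℝ (Fin m), x ≠ 0 → ContDiffAt ℝ 2 u x) ∧
        (∀ t : ℝ, 0 < t → ∀ x : EuclideanSpace ℝ (Fin m), x ≠ 0 → u (t • x) = u x) ∧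
        SolvesVerticalMeanCurvatureEq m u K :=
  nonexistence_large_K_general m hm b hb K hKge
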